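/- (Lemma 4) Under Assumptions 1 and 2, with ς continuous, there exist class K functions ϱ1, ϱ2, ϱ3 and a constant ϱ1* ≥ 0 such that, for all θ ∈ Θ, θ̃ ∈ ℝ^q, e, ε_e ∈ ℝⁿ and x_r ∈ ℝⁿ with |x_r| ≤ r1: (i) |φ̃_s(θ, θ̃, e + x_r)| ≤ (ϱ1(|e|) + ϱ1*)·γ_s(|θ̃|); and (ii) |Δ_f(θ, θ̃, x_r, e, ε_e)| ≤ (ϱ2(|e|) + ϱ3(|ε_e|))·γ_s(|θ̃|), where Δ_f(θ, θ̃, x_r, e, ε_e) := ς(x_r)·φ̃_s(θ, θ̃, x_r) − ς(e + x_r − ε_e)·φ̃_s(θ, θ̃, e + x_r). -/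

import Mathlib

/-!
Every point of `Θ` lies in a closed ball `K` that also contains the range of `satv`, and `satv`
fixes `Θ`; so `φ̃_s(θ, θ̃, x) = φ(a, x) - φ(θ, x)` with `a, θ ∈ K` and `|a - θ| ≤ γ_s(|θ̃|)`.
On the convex set `K` the mean value theorem bounds this increment by `sup ‖∂φ/∂θ‖ · |a - θ|`,
and its variation in `x` by a modulus of continuity of `∂φ/∂θ` on a compact set. For `Δ_f`, with
`z = e + x_r - ε_e`, write `ς(x_r) u - ς(z) v = (ς(x_r) - ς(z)) u + ς(z) (u - v)`.
Moduli of continuity of continuous maps at the points of a ball can be chosen of class K, and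
class K is closed under the sums and products that absorb all coefficients (the cross term
via `u v ≤ u² + v²`).
-/

open Real Set Filter
open scoped RealInnerProductSpace

noncomputable section

/-- A continuous function `ρ : [0,∞) → [0,∞)` is of class K if it is strictly
increasing with `ρ 0 = 0`. -/
def IsClassK (ρ : ℝ → ℝ) : Prop :=
  ContinuousOn ρ (Set.Ici 0) ∧ StrictMonoOn ρ (Set.Ici 0) ∧ ρ 0 = 0

/-- Class K-infinity: class K and unbounded. -/
def IsClassKInfty (ρ : ℝ → ℝ) : Prop :=
  IsClassK ρ ∧ Filter.Tendsto ρ Filter.atTop Filter.atTop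

/-- Class KL functions. -/
def IsClassKL (β : ℝ → ℝ → ℝ) : Prop :=
  (∀ t ∈ Set.Ici (0:ℝ), IsClassK fun s => β s t) ∧
  ∀ s ∈ Set.Ici (0:ℝ), AntitoneOn (β s) (Set.Ici 0) ∧
      Filter.Tendsto (β s) Filter.atTop (nhds 0)

/-- The smooth saturation function with level `ls` and margin `εs`. -/
noncomputable def sat (ls εs s : ℝ) : ℝ :=
  if |s| ≤ ls then s
  else if |s| ≤ ls + εs then s - Real.sign s * (|s| - ls) ^ 2 / (2 * εs)
  else (ls + εs / 2) * Real.sign s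

/-- Componentwise saturation on `ℝ^q`. -/
noncomputable def satv {q : ℕ} (ls εs : ℝ) (θ : EuclideanSpace ℝ (Fin q)) :
    EuclideanSpace ℝ (Fin q) := WithLp.toLp 2 (fun i => sat ls εs (θ i))

/-- The dead-zone function with level `lθ`. -/
noncomputable def dz (lθ s : ℝ) : ℝ :=
  if |s| ≤ lθ then 0
  else if |s| < lθ + 1 then
    (|s| - lθ) ^ 2 * (2 * (lθ + 1) ^ 2 - (2 * lθ + 1) * |s|) * Real.sign s
  else s

/-- Componentwise dead-zone on `ℝ^q`. -/
noncomputable def dzv {q : ℕ} (lθ : ℝ) (θ : EuclideanSpace ℝ (Fin q)) :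
    EuclideanSpace ℝ (Fin q) := WithLp.toLp 2 (fun i => dz lθ (θ i))

/-- `φ̃_s(θ†, θ‡, x) := φ(satv(θ† + θ‡), x) − φ(satv(θ†), x)`. -/
noncomputable def tphis {q n : ℕ} (ls εs : ℝ)
    (φ : EuclideanSpace ℝ (Fin q) → EuclideanSpace ℝ (Fin n) → EuclideanSpace ℝ (Fin n))
    (θ θt : EuclideanSpace ℝ (Fin q)) (x : EuclideanSpace ℝ (Fin n)) :
    EuclideanSpace ℝ (Fin n) :=
  φ (satv ls εs (θ + θt)) x - φ (satv ls εs θ) x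

namespace IsClassK

variable {f g : ℝ → ℝ}

lemma nonneg (hf : IsClassK f) {s : ℝ} (hs : 0 ≤ s) : 0 ≤ f s :=
  hf.2.2 ▸ hf.2.1.monotoneOn self_mem_Ici hs hs

lemma add (hf : IsClassK f) (hg : IsClassK g) : IsClassK (f + g) :=
  ⟨hf.1.add hg.1, fun _ ha _ hb hab => add_lt_add (hf.2.1 ha hb hab) (hg.2.1 ha hb hab),
    by simp [hf.2.2, hg.2.2]⟩

lemma mul (hf : IsClassK f) (hg : IsClassK g) : IsClassK (f * g) :=
  ⟨hf.1.mul hg.1, fun _ ha _ hb hab =>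
    mul_lt_mul'' (hf.2.1 ha hb hab) (hg.2.1 ha hb hab) (hf.nonneg ha) (hg.nonneg ha),
    by simp [hf.2.2]⟩

lemma const_mul (hf : IsClassK f) {c : ℝ} (hc : 0 < c) : IsClassK (fun s => c * f s) :=
  ⟨continuousOn_const.mul hf.1, fun _ ha _ hb hab => mul_lt_mul_of_pos_left (hf.2.1 ha hb hab) hc,
    by simp [hf.2.2]⟩

lemma comp_const_mul (hf : IsClassK f) {c : ℝ} (hc : 0 < c) : IsClassK (fun s => f (c * s)) := by
  have hmaps : MapsTo (fun s => c * s) (Ici 0) (Ici 0) := fun _ hs => mul_nonneg hc.le hs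
  exact ⟨hf.1.comp (continuousOn_const.mul continuousOn_id) hmaps,
    fun _ ha _ hb hab => hf.2.1 (hmaps ha) (hmaps hb) (mul_lt_mul_of_pos_left hab hc),
    by simp [hf.2.2]⟩

lemma apply_add_le (hf : IsClassK f) {a b : ℝ} (ha : 0 ≤ a) (hb : 0 ≤ b) :
    f (a + b) ≤ f (2 * a) + f (2 * b) := by
  have hmono := hf.2.1.monotoneOn
  rcases le_total a b with hab | hab
  · linarith [hmono (mem_Ici.2 (add_nonneg ha hb)) (mem_Ici.2 (by positivity : 0 ≤ 2 * b))
      (by linarith : a + b ≤ 2 * b), hf.nonneg (by positivity : 0 ≤ 2 * a)]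
  · linarith [hmono (mem_Ici.2 (add_nonneg ha hb)) (mem_Ici.2 (by positivity : 0 ≤ 2 * a))
      (by linarith : a + b ≤ 2 * a), hf.nonneg (by positivity : 0 ≤ 2 * b)]

end IsClassK

section Modulus

variable {E F : Type*} [NormedAddCommGroup E] [NormedSpace ℝ E] [NormedAddCommGroup F]

/-- Scaling the unit ball by `s`, rather than taking increments in the ball of radius `s`,
makes this a supremum over a fixed compact set, hence continuous in `s`. -/
def ballModulus (g : E → F) (r s : ℝ) : ℝ :=
  sSup ((fun p : E × E => ‖g (p.1 + s • p.2) - g p.1‖) ''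
    (Metric.closedBall 0 r ×ˢ Metric.closedBall 0 1))

variable {g : E → F} {r : ℝ}

lemma ballModulus_nonneg (s : ℝ) : 0 ≤ ballModulus g r s :=
  Real.sSup_nonneg <| by rintro _ ⟨p, -, rfl⟩; exact norm_nonneg _

lemma ballModulus_zero : ballModulus g r 0 = 0 :=
  le_antisymm (Real.sSup_nonpos <| by rintro _ ⟨p, -, rfl⟩; simp) (ballModulus_nonneg 0)

lemma continuous_ballModulus [ProperSpace E] (hg : Continuous g) :
    Continuous (ballModulus g r) :=
  ((isCompact_closedBall _ _).prod (isCompact_closedBall _ _)).continuous_sSup (by fun_prop)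

lemma norm_sub_le_ballModulus [ProperSpace E] (hg : Continuous g) {x d : E} {s : ℝ}
    (hx : ‖x‖ ≤ r) (hd : ‖d‖ ≤ s) : ‖g (x + d) - g x‖ ≤ ballModulus g r s := by
  rcases (norm_nonneg d).trans hd |>.eq_or_lt with rfl | hs
  · simp [norm_le_zero_iff.1 hd, ballModulus_nonneg]
  have hbdd := (((isCompact_closedBall (0 : E) r).prod (isCompact_closedBall (0 : E) 1)).image
    (f := fun p : E × E => ‖g (p.1 + s • p.2) - g p.1‖) (by fun_prop)).bddAbove
  refine le_csSup hbdd ⟨(x, s⁻¹ • d), ⟨mem_closedBall_zero_iff.2 hx, ?_⟩, ?_⟩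
  · rw [mem_closedBall_zero_iff, norm_smul, norm_inv, Real.norm_of_nonneg hs.le]
    exact inv_mul_le_one_of_le₀ hd hs.le
  · simp [smul_smul, hs.ne']

lemma monotoneOn_ballModulus [ProperSpace E] (hg : Continuous g) (hr : 0 ≤ r) :
    MonotoneOn (ballModulus g r) (Ici 0) := by
  intro s hs t _ hst
  refine csSup_le ⟨_, (0, 0), ⟨by simpa using hr, by simp⟩, rfl⟩ ?_
  rintro _ ⟨⟨x, d⟩, ⟨hx, hd⟩, rfl⟩
  rw [mem_closedBall_zero_iff] at hx hd
  refine norm_sub_le_ballModulus hg hx ?_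
  rw [norm_smul, Real.norm_of_nonneg hs]
  nlinarith [norm_nonneg d, mem_Ici.1 hs]

lemma exists_isClassK_modulus [ProperSpace E] (hg : Continuous g) (r : ℝ) :
    ∃ ω : ℝ → ℝ, IsClassK ω ∧ ∀ x : E, ‖x‖ ≤ r → ∀ d, ‖g (x + d) - g x‖ ≤ ω ‖d‖ := by
  refine ⟨fun s => s + ballModulus g (max r 0) s, ⟨?_, ?_, by simp [ballModulus_zero]⟩, ?_⟩
  · exact continuousOn_id.add (continuous_ballModulus hg).continuousOn
  · exact fun s hs t ht hst =>
      add_lt_add_of_lt_of_le hst (monotoneOn_ballModulus hg (le_max_right _ _) hs ht hst.le)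
  · exact fun x hx d => (norm_sub_le_ballModulus hg (hx.trans (le_max_left _ _)) le_rfl).trans
      (le_add_of_nonneg_left (norm_nonneg d))

end Modulus

lemma abs_sat_le (ls εs s : ℝ) : |sat ls εs s| ≤ |ls| + 2 * |εs| := by
  have hsign : |Real.sign s| ≤ 1 := by
    rcases Real.sign_apply_eq s with h | h | h <;> simp [h]
  unfold sat
  split_ifs with h1 h2
  · linarith [le_abs_self ls, abs_nonneg εs]
  · have hεs : 0 < εs := by linarith
    have hcorr : |Real.sign s * (|s| - ls) ^ 2 / (2 * εs)| ≤ εs / 2 := by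
      have hsq : (|s| - ls) ^ 2 ≤ εs ^ 2 := pow_le_pow_left₀ (by linarith) (by linarith) 2
      rw [abs_div, abs_mul, abs_of_nonneg (sq_nonneg (|s| - ls)),
        abs_of_pos (by positivity : 0 < 2 * εs), div_le_iff₀ (by positivity)]
      nlinarith [abs_nonneg (Real.sign s)]
    calc |s - Real.sign s * (|s| - ls) ^ 2 / (2 * εs)|
        ≤ |s| + |Real.sign s * (|s| - ls) ^ 2 / (2 * εs)| := abs_sub _ _
      _ ≤ |ls| + 2 * |εs| := by linarith [le_abs_self ls, abs_of_pos hεs]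
  · rw [abs_mul]
    calc |ls + εs / 2| * |Real.sign s| ≤ |ls + εs / 2| :=
          mul_le_of_le_one_right (abs_nonneg _) hsign
      _ ≤ |ls| + |εs / 2| := abs_add_le _ _
      _ ≤ |ls| + 2 * |εs| := by rw [abs_div]; norm_num; linarith [abs_nonneg εs]

lemma EuclideanSpace.norm_le_sqrt_card_mul {ι : Type*} [Fintype ι] {x : EuclideanSpace ℝ ι}
    {M : ℝ} (hM : 0 ≤ M) (hx : ∀ i, ‖x i‖ ≤ M) : ‖x‖ ≤ √(Fintype.card ι) * M := by
  rw [EuclideanSpace.norm_eq, ← Real.sqrt_sq hM, ← Real.sqrt_mul (Nat.cast_nonneg _)]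
  refine Real.sqrt_le_sqrt ?_
  calc ∑ i, ‖x i‖ ^ 2 ≤ ∑ _i : ι, M ^ 2 := by gcongr with i; exact hx i
    _ = _ := by simp

lemma norm_satv_le {q : ℕ} (ls εs : ℝ) (w : EuclideanSpace ℝ (Fin q)) :
    ‖satv ls εs w‖ ≤ √q * (|ls| + 2 * |εs|) := by
  simpa using EuclideanSpace.norm_le_sqrt_card_mul (by positivity) fun i => abs_sat_le ls εs (w i)

lemma satv_eq_self {q : ℕ} {ls εs : ℝ} {w : EuclideanSpace ℝ (Fin q)} (hw : ‖w‖ ≤ ls) :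
    satv ls εs w = w := by
  ext i
  exact if_pos ((PiLp.norm_apply_le w i).trans hw)

lemma ContinuousLinearMap.norm_apply_sub_apply_le {𝕜 F G : Type*} [NontriviallyNormedField 𝕜]
    [NormedAddCommGroup F] [NormedSpace 𝕜 F] [NormedAddCommGroup G] [NormedSpace 𝕜 G]
    (A B : F →L[𝕜] G) (u v : F) : ‖A u - B v‖ ≤ ‖A - B‖ * ‖u‖ + ‖B‖ * ‖u - v‖ :=
  calc ‖A u - B v‖ = ‖(A - B) u + B (u - v)‖ := by simp
    _ ≤ ‖A - B‖ * ‖u‖ + ‖B‖ * ‖u - v‖ :=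
      (norm_add_le _ _).trans (add_le_add ((A - B).le_opNorm u) (B.le_opNorm _))

section Increments

variable {P E F G : Type*}
  [NormedAddCommGroup P] [NormedSpace ℝ P] [ProperSpace P]
  [NormedAddCommGroup E] [NormedSpace ℝ E] [ProperSpace E]
  [NormedAddCommGroup F] [NormedSpace ℝ F] [NormedAddCommGroup G] [NormedSpace ℝ G]
  {φ : P → E → F} {Dφ : P → E → P →L[ℝ] F} {K : Set P}

lemma exists_norm_increment_le_of_hasFDerivAt
    (hφ : ∀ ϑ x, HasFDerivAt (fun ϑ' => φ ϑ' x) (Dφ ϑ x) ϑ)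
    (hDφ : Continuous fun p : P × E => Dφ p.1 p.2) (hK : IsCompact K) (hKc : Convex ℝ K)
    (r : ℝ) :
    ∃ C > 0, ∃ ω : ℝ → ℝ, IsClassK ω ∧ ∀ a ∈ K, ∀ b ∈ K, ∀ x : E, ‖x‖ ≤ r → ∀ e : E,
      ‖φ a x - φ b x‖ ≤ C * ‖a - b‖ ∧
      ‖(φ a (x + e) - φ b (x + e)) - (φ a x - φ b x)‖ ≤ ω ‖e‖ * ‖a - b‖ := by
  obtain ⟨R, -, hR⟩ := hK.isBounded.exists_pos_norm_le
  obtain ⟨C, hC, hDφ_le⟩ :=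
    ((hK.prod (isCompact_closedBall (0 : E) r)).image hDφ).isBounded.exists_pos_norm_le
  obtain ⟨ω, hω, hDφ_sub_le⟩ := exists_isClassK_modulus hDφ (max R r)
  refine ⟨C, hC, ω, hω, fun a ha b hb x hx e => ⟨?_, ?_⟩⟩
  · exact Convex.norm_image_sub_le_of_norm_hasFDerivWithin_le
      (fun ϑ _ => (hφ ϑ x).hasFDerivWithinAt)
      (fun ϑ hϑ => hDφ_le _ ⟨(ϑ, x), ⟨hϑ, mem_closedBall_zero_iff.2 hx⟩, rfl⟩) hKc hb ha
  · have hDφ_shift : ∀ ϑ ∈ K, ‖Dφ ϑ (x + e) - Dφ ϑ x‖ ≤ ω ‖e‖ := fun ϑ hϑ => by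
      simpa using hDφ_sub_le (ϑ, x)
        (norm_prod_le_iff.2 ⟨(hR ϑ hϑ).trans (le_max_left _ _), hx.trans (le_max_right _ _)⟩)
        (0, e)
    have := Convex.norm_image_sub_le_of_norm_hasFDerivWithin_le
      (fun ϑ _ => ((hφ ϑ (x + e)).sub (hφ ϑ x)).hasFDerivWithinAt) hDφ_shift hKc hb ha
    convert this using 2
    simp only [Pi.sub_apply]
    abel

lemma exists_isClassK_increment_bounds
    (hφ : ∀ ϑ x, HasFDerivAt (fun ϑ' => φ ϑ' x) (Dφ ϑ x) ϑ)
    (hDφ : Continuous fun p : P × E => Dφ p.1 p.2) {ς : E → F →L[ℝ] G} (hς : Continuous ς)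
    (hK : IsCompact K) (hKc : Convex ℝ K) (r : ℝ) :
    ∃ (ϱ1 ϱ2 ϱ3 : ℝ → ℝ) (ϱ1s : ℝ), IsClassK ϱ1 ∧ IsClassK ϱ2 ∧ IsClassK ϱ3 ∧ 0 ≤ ϱ1s ∧
      ∀ a ∈ K, ∀ b ∈ K, ∀ e εe xr : E, ‖xr‖ ≤ r →
        ‖φ a (e + xr) - φ b (e + xr)‖ ≤ (ϱ1 ‖e‖ + ϱ1s) * ‖a - b‖ ∧
        ‖ς xr (φ a xr - φ b xr) - ς (e + xr - εe) (φ a (e + xr) - φ b (e + xr))‖ ≤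
          (ϱ2 ‖e‖ + ϱ3 ‖εe‖) * ‖a - b‖ := by
  obtain ⟨Cφ, hCφ, ωφ, hωφ, hφ_le⟩ := exists_norm_increment_le_of_hasFDerivAt hφ hDφ hK hKc r
  obtain ⟨Cς, hCς, hς_le⟩ :=
    ((isCompact_closedBall (0 : E) r).image hς).isBounded.exists_pos_norm_le
  obtain ⟨ως, hως, hς_sub_le⟩ := exists_isClassK_modulus hς r
  set σ : ℝ → ℝ := fun s => ως (2 * s)
  have hσ : IsClassK σ := hως.comp_const_mul two_pos
  refine ⟨ωφ, fun s => Cφ * σ s + Cς * ωφ s + σ s * ωφ s + ωφ s * ωφ s,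
    fun s => Cφ * σ s + σ s * σ s, Cφ, hωφ,
    (((hσ.const_mul hCφ).add (hωφ.const_mul hCς)).add (hσ.mul hωφ)).add (hωφ.mul hωφ),
    (hσ.const_mul hCφ).add (hσ.mul hσ), hCφ.le, fun a ha b hb e εe xr hxr => ?_⟩
  obtain ⟨hψr, hψd⟩ := hφ_le a ha b hb xr hxr e
  rw [add_comm xr e] at hψd
  set ψr := φ a xr - φ b xr
  set ψx := φ a (e + xr) - φ b (e + xr)
  set δ := ‖a - b‖
  have hψx : ‖ψx‖ ≤ (ωφ ‖e‖ + Cφ) * δ := by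
    linarith [norm_le_insert' ψx ψr]
  have hς_r : ‖ς xr‖ ≤ Cς := hς_le _ ⟨xr, mem_closedBall_zero_iff.2 hxr, rfl⟩
  have hς_sub : ‖ς (e + xr - εe) - ς xr‖ ≤ σ ‖e‖ + σ ‖εe‖ :=
    calc ‖ς (e + xr - εe) - ς xr‖ = ‖ς (xr + (e - εe)) - ς xr‖ := by abel_nf
      _ ≤ ως ‖e - εe‖ := hς_sub_le xr hxr _
      _ ≤ ως (‖e‖ + ‖εe‖) :=
        hως.2.1.monotoneOn (norm_nonneg _) (mem_Ici.2 (by positivity)) (norm_sub_le e εe)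
      _ ≤ σ ‖e‖ + σ ‖εe‖ := hως.apply_add_le (norm_nonneg e) (norm_nonneg εe)
  have hσe := hσ.nonneg (norm_nonneg e)
  have hσεe := hσ.nonneg (norm_nonneg εe)
  have hωφe := hωφ.nonneg (norm_nonneg e)
  refine ⟨hψx, ?_⟩
  calc ‖ς xr ψr - ς (e + xr - εe) ψx‖
      ≤ ‖ς xr - ς (e + xr - εe)‖ * ‖ψr‖ + ‖ς (e + xr - εe)‖ * ‖ψr - ψx‖ :=
        ContinuousLinearMap.norm_apply_sub_apply_le _ _ _ _
    _ ≤ (σ ‖e‖ + σ ‖εe‖) * (Cφ * δ) + (Cς + (σ ‖e‖ + σ ‖εe‖)) * (ωφ ‖e‖ * δ) := by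
        gcongr
        · rwa [norm_sub_rev]
        · linarith [norm_le_insert' (ς (e + xr - εe)) (ς xr)]
        · rwa [norm_sub_rev]
    _ ≤ _ := by
        have hcoef : σ ‖εe‖ * ωφ ‖e‖ ≤ ωφ ‖e‖ * ωφ ‖e‖ + σ ‖εe‖ * σ ‖εe‖ := by
          nlinarith [sq_nonneg (ωφ ‖e‖ - σ ‖εe‖)]
        nlinarith [norm_nonneg (a - b)]

end Increments

theorem statement15_general (q n : ℕ)
    (Θ : Set (EuclideanSpace ℝ (Fin q)))
    (lθ ls εs r1 : ℝ) (hlθ : ∀ ϑ ∈ Θ, ‖ϑ‖ ≤ lθ) (hls : lθ < ls)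
    -- Assumption 1
    (φ : EuclideanSpace ℝ (Fin q) → EuclideanSpace ℝ (Fin n) → EuclideanSpace ℝ (Fin n))
    (Dφ : EuclideanSpace ℝ (Fin q) → EuclideanSpace ℝ (Fin n) →
      (EuclideanSpace ℝ (Fin q) →L[ℝ] EuclideanSpace ℝ (Fin n)))
    (hφ : ∀ ϑ x, HasFDerivAt (fun ϑ' => φ ϑ' x) (Dφ ϑ x) ϑ)
    (hDφ : Continuous fun p : EuclideanSpace ℝ (Fin q) × EuclideanSpace ℝ (Fin n) =>
      Dφ p.1 p.2)
    -- ς continuous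
    (ς : EuclideanSpace ℝ (Fin n) →
      (EuclideanSpace ℝ (Fin n) →L[ℝ] EuclideanSpace ℝ (Fin q))) (hς : Continuous ς)
    -- γ_s
    (γs : ℝ → ℝ)
    (hγs_sat : ∀ (θt : EuclideanSpace ℝ (Fin q)), ∀ ϑ ∈ Θ,
      ‖satv ls εs (ϑ + θt) - ϑ‖ ≤ γs ‖θt‖) :
    ∃ (ϱ1 ϱ2 ϱ3 : ℝ → ℝ) (ϱ1s : ℝ), IsClassK ϱ1 ∧ IsClassK ϱ2 ∧ IsClassK ϱ3 ∧
      0 ≤ ϱ1s ∧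
      ∀ θ ∈ Θ, ∀ (θt : EuclideanSpace ℝ (Fin q))
        (e εe xr : EuclideanSpace ℝ (Fin n)), ‖xr‖ ≤ r1 →
        ‖tphis ls εs φ θ θt (e + xr)‖ ≤ (ϱ1 ‖e‖ + ϱ1s) * γs ‖θt‖ ∧
        ‖ς xr (tphis ls εs φ θ θt xr) -
            ς (e + xr - εe) (tphis ls εs φ θ θt (e + xr))‖ ≤
          (ϱ2 ‖e‖ + ϱ3 ‖εe‖) * γs ‖θt‖ := by
  set K := Metric.closedBall (0 : EuclideanSpace ℝ (Fin q)) (max (√q * (|ls| + 2 * |εs|)) lθ)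
  have hsatv_mem : ∀ w, satv ls εs w ∈ K := fun w =>
    mem_closedBall_zero_iff.2 ((norm_satv_le ls εs w).trans (le_max_left _ _))
  have hΘ_mem : ∀ ϑ ∈ Θ, ϑ ∈ K := fun ϑ hϑ =>
    mem_closedBall_zero_iff.2 ((hlθ ϑ hϑ).trans (le_max_right _ _))
  obtain ⟨ϱ1, ϱ2, ϱ3, ϱ1s, hϱ1, hϱ2, hϱ3, hϱ1s, hbounds⟩ :=
    exists_isClassK_increment_bounds hφ hDφ hς (isCompact_closedBall _ _)
      (convex_closedBall _ _) r1
  refine ⟨ϱ1, ϱ2, ϱ3, ϱ1s, hϱ1, hϱ2, hϱ3, hϱ1s, fun θ hθ θt e εe xr hxr => ?_⟩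
  obtain ⟨hφ_inc, hmismatch⟩ := hbounds _ (hsatv_mem (θ + θt)) θ (hΘ_mem θ hθ) e εe xr hxr
  simp only [tphis, satv_eq_self ((hlθ θ hθ).trans hls.le)]
  have hγ := hγs_sat θt θ hθ
  exact ⟨hφ_inc.trans (mul_le_mul_of_nonneg_left hγ (by linarith [hϱ1.nonneg (norm_nonneg e)])),
    hmismatch.trans (mul_le_mul_of_nonneg_left hγ
      (add_nonneg (hϱ2.nonneg (norm_nonneg e)) (hϱ3.nonneg (norm_nonneg εe))))⟩

/-- Lemma 4: bounds on `φ̃_s` and on the filter mismatch `Δ_f`. -/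
theorem statement15 (q n : ℕ)
    (Θ : Set (EuclideanSpace ℝ (Fin q))) (hΘ : IsCompact Θ)
    (lθ ls εs r1 : ℝ) (hlθ : ∀ ϑ ∈ Θ, ‖ϑ‖ ≤ lθ) (hls : lθ < ls)
    (hεs : 0 < εs) (hεs1 : εs ≤ 1) (hr1 : 0 < r1)
    -- Assumption 1
    (φ : EuclideanSpace ℝ (Fin q) → EuclideanSpace ℝ (Fin n) → EuclideanSpace ℝ (Fin n))
    (Dφ : EuclideanSpace ℝ (Fin q) → EuclideanSpace ℝ (Fin n) →
      (EuclideanSpace ℝ (Fin q) →L[ℝ] EuclideanSpace ℝ (Fin n)))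
    (hφ : ∀ ϑ x, HasFDerivAt (fun ϑ' => φ ϑ' x) (Dφ ϑ x) ϑ)
    (hDφ : Continuous fun p : EuclideanSpace ℝ (Fin q) × EuclideanSpace ℝ (Fin n) =>
      Dφ p.1 p.2)
    -- ς continuous
    (ς : EuclideanSpace ℝ (Fin n) →
      (EuclideanSpace ℝ (Fin n) →L[ℝ] EuclideanSpace ℝ (Fin q))) (hς : Continuous ς)
    -- γ_s
    (γs : ℝ → ℝ) (hγs : IsClassK γs) (hγs_le : ∀ s ≥ (0:ℝ), γs s ≤ s)
    (hγs_sat : ∀ (θt : EuclideanSpace ℝ (Fin q)), ∀ ϑ ∈ Θ,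
      ‖satv ls εs (ϑ + θt) - ϑ‖ ≤ γs ‖θt‖) :
    ∃ (ϱ1 ϱ2 ϱ3 : ℝ → ℝ) (ϱ1s : ℝ), IsClassK ϱ1 ∧ IsClassK ϱ2 ∧ IsClassK ϱ3 ∧
      0 ≤ ϱ1s ∧
      ∀ θ ∈ Θ, ∀ (θt : EuclideanSpace ℝ (Fin q))
        (e εe xr : EuclideanSpace ℝ (Fin n)), ‖xr‖ ≤ r1 →
        ‖tphis ls εs φ θ θt (e + xr)‖ ≤ (ϱ1 ‖e‖ + ϱ1s) * γs ‖θt‖ ∧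
        ‖ς xr (tphis ls εs φ θ θt xr) -
            ς (e + xr - εe) (tphis ls εs φ θ θt (e + xr))‖ ≤
          (ϱ2 ‖e‖ + ϱ3 ‖εe‖) * γs ‖θt‖ :=
  statement15_general q n Θ lθ ls εs r1 hlθ hls φ Dφ hφ hDφ ς hς γs hγs_sat
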